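/- arXiv:2604.25595 — 3 statements merged into one kernel-verified Lean document; each statement's English description precedes it below -/
import Mathlib

section
/- Let X be a metric space with bounded geometry equipped with a free, proper, isometric right action of a countable discrete group Γ. For every R ≥ 0, the set Δ_R/Γ ⊆ (X×X)/Γ can be partitioned into finitely many pairwise disjoint subsets V₁, …, V_m with m ≤ 2N_R − 1, where N_R bounds the cardinality of every closed R-ball in X, such that both r₀ and s₀ restrict to injective maps on each Vᵢ. -/
structure RightAction (Γ : Type*) (X : Type*) [Group Γ] where
  act : X → Γ → X
  act_one : ∀ x, act x 1 = x
  act_mul : ∀ x γ δ, act (act x γ) δ = act x (γ * δ)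

namespace RightAction

variable {Γ X : Type*} [Group Γ]

/-- The orbit equivalence relation of a right action. -/
def setoid (ρ : RightAction Γ X) : Setoid X where
  r x y := ∃ γ : Γ, ρ.act x γ = y
  iseqv := by
    refine ⟨fun x => ⟨1, ρ.act_one x⟩, ?_, ?_⟩
    · rintro x y ⟨γ, rfl⟩
      exact ⟨γ⁻¹, by rw [ρ.act_mul, mul_inv_cancel, ρ.act_one]⟩
    · rintro x y z ⟨γ, rfl⟩ ⟨δ, rfl⟩
      exact ⟨γ * δ, (ρ.act_mul x γ δ).symm⟩

/-- The diagonal right action on `X × X`. -/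
def prod (ρ : RightAction Γ X) : RightAction Γ (X × X) where
  act p γ := (ρ.act p.1 γ, ρ.act p.2 γ)
  act_one p := by simp [ρ.act_one]
  act_mul p γ δ := by simp [ρ.act_mul]

/-- The action is by isometries. -/
def IsIsometric [MetricSpace X] (ρ : RightAction Γ X) : Prop :=
  ∀ (x y : X) (γ : Γ), dist (ρ.act x γ) (ρ.act y γ) = dist x y

/-- The action is free. -/
def IsFree (ρ : RightAction Γ X) : Prop :=
  ∀ (x : X) (γ : Γ), ρ.act x γ = x → γ = 1

/-- The action is metrically proper. -/
def IsProper [MetricSpace X] (ρ : RightAction Γ X) : Prop :=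
  ∀ (x : X) (R : ℝ), {γ : Γ | dist x (ρ.act x γ) ≤ R}.Finite

end RightAction

/-- The range map `r₀ : (X×X)/Γ → X/Γ`, `[x,y] ↦ [x]`. -/
def rangeMap {Γ X : Type*} [Group Γ] (ρ : RightAction Γ X) :
    Quotient ρ.prod.setoid → Quotient ρ.setoid :=
  Quotient.lift (fun p : X × X => Quotient.mk ρ.setoid p.1)
    (by rintro a b ⟨γ, rfl⟩; exact Quotient.sound ⟨γ, rfl⟩)

/-- The source map `s₀ : (X×X)/Γ → X/Γ`, `[x,y] ↦ [y]`. -/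
def sourceMap {Γ X : Type*} [Group Γ] (ρ : RightAction Γ X) :
    Quotient ρ.prod.setoid → Quotient ρ.setoid :=
  Quotient.lift (fun p : X × X => Quotient.mk ρ.setoid p.2)
    (by rintro a b ⟨γ, rfl⟩; exact Quotient.sound ⟨γ, rfl⟩)

/-- The image `Δ_R/Γ` of the `R`-entourage in `(X×X)/Γ`. -/
def deltaQ {Γ X : Type*} [Group Γ] [MetricSpace X] (ρ : RightAction Γ X) (R : ℝ) :
    Set (Quotient ρ.prod.setoid) :=
  Quotient.mk ρ.prod.setoid '' {p : X × X | dist p.1 p.2 ≤ R}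

open Set in
private lemma exists_maximal_indep {α : Type*} (G : α → α → Prop)
    (hsymm : ∀ a b, G a b → G b a) (hirr : ∀ a, ¬ G a a) (T : Set α) :
    ∃ M : Set α, M ⊆ T ∧ (∀ a ∈ M, ∀ b ∈ M, ¬ G a b) ∧
      ∀ x ∈ T, x ∉ M → ∃ y ∈ M, G x y := by
  obtain ⟨M, hM⟩ := zorn_subset {M : Set α | M ⊆ T ∧ ∀ a ∈ M, ∀ b ∈ M, ¬ G a b}
    (fun c hc hchain => by
      refine ⟨⋃₀ c, ⟨?_, ?_⟩, fun s hs => subset_sUnion_of_mem hs⟩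
      · exact sUnion_subset fun s hs => (hc hs).1
      · rintro a ⟨s, hs, has⟩ b ⟨t, ht, hbt⟩
        rcases hchain.total hs ht with h | h
        · exact (hc ht).2 a (h has) b hbt
        · exact (hc hs).2 a has b (h hbt))
  refine ⟨M, hM.prop.1, hM.prop.2, fun x hxT hxM => ?_⟩
  by_contra h
  push_neg at h
  have : insert x M ∈ {M : Set α | M ⊆ T ∧ ∀ a ∈ M, ∀ b ∈ M, ¬ G a b} := by
    refine ⟨insert_subset hxT hM.prop.1, ?_⟩
    rintro a (rfl | ha) b (rfl | hb)
    · exact hirr _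
    · exact h b hb
    · exact fun hg => h a ha (hsymm _ _ hg)
    · exact hM.prop.2 a ha b hb
  exact hxM (hM.2 this (subset_insert x M) (mem_insert x M))

open Set in
private lemma color_lemma {α : Type*} (S : Set α) (G : α → α → Prop)
    (hsymm : ∀ a b, G a b → G b a) (hirr : ∀ a, ¬ G a a) (d : ℕ)
    (hfin : ∀ e ∈ S, {f | f ∈ S ∧ G e f}.Finite ∧ {f | f ∈ S ∧ G e f}.ncard ≤ d) :
    ∃ V : Fin (d+1) → Set α, (∀ i, V i ⊆ S) ∧
      (Pairwise fun i j => Disjoint (V i) (V j)) ∧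
      (⋃ i, V i) = S ∧ ∀ i, ∀ a ∈ V i, ∀ b ∈ V i, ¬ G a b := by
  choose M hM1 hM2 hM3 using exists_maximal_indep G hsymm hirr
  set T : ℕ → Set α := fun n => Nat.rec S (fun _ Tn => Tn \ M Tn) n with hT
  have hTsucc : ∀ n, T (n+1) = T n \ M (T n) := fun n => rfl
  have hTsub : ∀ n, T (n+1) ⊆ T n := fun n => diff_subset
  have hTadd : ∀ m k, T (m + k) ⊆ T m := by
    intro m k
    induction k with
    | zero => exact subset_rfl
    | succ k ih => exact (hTsub (m + k)).trans ih
  have hTmono : ∀ m n, m ≤ n → T n ⊆ T m := by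
    intro m n h
    have : n = m + (n - m) := by omega
    rw [this]; exact hTadd m (n - m)
  have hTS : ∀ n, T n ⊆ S := fun n => hTmono 0 n (Nat.zero_le n)
  set V : Fin (d+1) → Set α := fun i => if (i : ℕ) < d then M (T i) else T d with hV
  have hVT : ∀ i : Fin (d+1), V i ⊆ T i := by
    intro i
    simp only [hV]
    split_ifs with h
    · exact hM1 (T i)
    · have : (i : ℕ) = d := by omega
      rw [this]
  have hVS : ∀ i, V i ⊆ S := fun i => (hVT i).trans (hTS i)
  have key : ∀ i j : Fin (d+1), (i : ℕ) < (j : ℕ) → Disjoint (V i) (V j) := by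
    intro i j hij
    have hi : (i : ℕ) < d := by omega
    have h1 : V i = M (T i) := if_pos hi
    have h2 : V j ⊆ T i \ M (T i) := by
      refine (hVT j).trans ?_
      rw [← hTsucc]
      exact hTmono ((i : ℕ)+1) (j : ℕ) (by omega)
    rw [h1]
    exact Set.disjoint_left.mpr fun x hx hxj => (h2 hxj).2 hx
  refine ⟨V, hVS, ?_, ?_, ?_⟩
  · intro i j hij
    rcases lt_or_gt_of_ne (Fin.val_ne_of_ne hij) with h | h
    · exact key i j h
    · exact (key j i h).symm
  · apply subset_antisymm
    · exact Set.iUnion_subset hVS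
    · intro x hx
      have claim : ∀ n, x ∉ T n → ∃ i, i < n ∧ x ∈ M (T i) := by
        intro n
        induction n with
        | zero => exact fun h => absurd hx h
        | succ n ih =>
          intro h
          by_cases hxn : x ∈ T n
          · refine ⟨n, Nat.lt_succ_self n, ?_⟩
            rw [hTsucc] at h
            by_contra hm
            exact h ⟨hxn, hm⟩
          · obtain ⟨i, hi, hmi⟩ := ih hxn
            exact ⟨i, Nat.lt_succ_of_lt hi, hmi⟩
      by_cases hxd : x ∈ T d
      · refine Set.mem_iUnion.mpr ⟨⟨d, Nat.lt_succ_self d⟩, ?_⟩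
        simp only [hV, lt_irrefl, if_neg (lt_irrefl d)]
        exact hxd
      · obtain ⟨i, hi, hmi⟩ := claim d hxd
        refine Set.mem_iUnion.mpr ⟨⟨i, by omega⟩, ?_⟩
        simp only [hV]
        rw [if_pos hi]
        exact hmi
  · intro i
    by_cases hi : (i : ℕ) < d
    · rw [hV]
      simp only [if_pos hi]
      exact hM2 (T i)
    · have hVi : V i = T d := by
        show (if (i : ℕ) < d then M (T (i : ℕ)) else T d) = T d
        rw [if_neg hi]
      rw [hVi]
      intro a ha b hb hab
      have hne : a ≠ b := fun h => hirr a (h ▸ hab)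
      obtain ⟨hCfin, hCcard⟩ := hfin a (hTS d ha)
      have haT : ∀ i : ℕ, i < d → a ∈ T i \ M (T i) := by
        intro i hi
        rw [← hTsucc]
        exact hTmono (i+1) d (by omega) ha
      have hy : ∀ i : Fin d, ∃ y, y ∈ M (T (i : ℕ)) ∧ G a y := by
        intro i
        exact hM3 (T (i : ℕ)) a (haT i i.isLt).1 (haT i i.isLt).2
      choose y hy1 hy2 using hy
      have yinj : Function.Injective y := by
        have aux : ∀ i j : Fin d, (i : ℕ) < (j : ℕ) → y i ≠ y j := by
          intro i j hij heq
          have h1 : y j ∈ T (i : ℕ) \ M (T (i : ℕ)) := by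
            rw [← hTsucc]
            exact hTmono ((i : ℕ)+1) (j : ℕ) (by omega) ((hM1 _) (hy1 j))
          exact h1.2 (heq ▸ hy1 i)
        intro i j hij
        by_contra hne'
        rcases lt_trichotomy (i : ℕ) (j : ℕ) with h | h | h
        · exact aux i j h hij
        · exact hne' (Fin.ext h)
        · exact aux j i h hij.symm
      have hby : b ∉ Set.range y := by
        rintro ⟨i, rfl⟩
        have h1 : y i ∈ T (i : ℕ) \ M (T (i : ℕ)) := by
          rw [← hTsucc]
          exact hTmono ((i : ℕ)+1) d (by omega) hb
        exact h1.2 (hy1 i)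
      have hsub : insert b (Set.range y) ⊆ {f | f ∈ S ∧ G a f} := by
        intro z hz
        rcases Set.mem_insert_iff.mp hz with h | h
        · subst h; exact ⟨hTS d hb, hab⟩
        · obtain ⟨i, hi⟩ := h
          subst hi
          exact ⟨hTS _ (hM1 _ (hy1 i)), hy2 i⟩
      have hrfin : (Set.range y).Finite := Set.finite_range y
      have hrcard : (Set.range y).ncard = d := by
        rw [← Set.image_univ, Set.ncard_image_of_injective _ yinj, Set.ncard_univ,
          Nat.card_eq_fintype_card, Fintype.card_fin]
      have : (insert b (Set.range y)).ncard = d + 1 := by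
        rw [Set.ncard_insert_of_notMem hby hrfin, hrcard]
      have hle := Set.ncard_le_ncard hsub hCfin
      omega

/-- `Δ_R/Γ` can be partitioned into at most `2·N_R − 1` pieces on each of which
both `r₀` and `s₀` are injective. -/
theorem partition_deltaQ
    {Γ X : Type*} [Group Γ] [Countable Γ] [MetricSpace X]
    (ρ : RightAction Γ X) (hfree : ρ.IsFree) (hproper : ρ.IsProper)
    (hiso : ρ.IsIsometric)
    (R : ℝ) (hR : 0 ≤ R) (NR : ℕ)
    (hN : ∀ x : X, {y : X | dist x y ≤ R}.Finite ∧ {y : X | dist x y ≤ R}.ncard ≤ NR) :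
    ∃ (m : ℕ) (V : Fin m → Set (Quotient ρ.prod.setoid)),
      m ≤ 2 * NR - 1 ∧
      (∀ i, V i ⊆ deltaQ ρ R) ∧
      (Pairwise fun i j => Disjoint (V i) (V j)) ∧
      (⋃ i, V i) = deltaQ ρ R ∧
      ∀ i, Set.InjOn (rangeMap ρ) (V i) ∧ Set.InjOn (sourceMap ρ) (V i) := by
  rcases Nat.eq_zero_or_pos NR with hNR | hNR
  · -- NR = 0 : deltaQ is empty
    have hempty : deltaQ ρ R = ∅ := by
      rw [Set.eq_empty_iff_forall_notMem]
      rintro q ⟨p, hp, rfl⟩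
      obtain ⟨hfin, hcard⟩ := hN p.1
      have hmem : p.1 ∈ {y : X | dist p.1 y ≤ R} := by simp [hR]
      have : {y : X | dist p.1 y ≤ R}.ncard = 0 := by omega
      rw [Set.ncard_eq_zero hfin] at this
      rw [this] at hmem
      exact hmem
    refine ⟨0, fun i => i.elim0, by omega, fun i => i.elim0, fun i => i.elim0, ?_,
      fun i => i.elim0⟩
    simp [hempty]
  · -- NR ≥ 1
    set Q := Quotient ρ.prod.setoid
    set G : Q → Q → Prop := fun e f =>
      e ≠ f ∧ (rangeMap ρ e = rangeMap ρ f ∨ sourceMap ρ e = sourceMap ρ f) with hG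
    have hsymm : ∀ a b, G a b → G b a := by
      rintro a b ⟨h1, h2⟩
      exact ⟨h1.symm, h2.imp Eq.symm Eq.symm⟩
    have hirr : ∀ a, ¬ G a a := fun a h => h.1 rfl
    -- fibers of the range map over a point are covered by a ball image
    have fiber_r : ∀ x : X,
        {f | f ∈ deltaQ ρ R ∧ rangeMap ρ f = Quotient.mk ρ.setoid x} ⊆
          (fun z => Quotient.mk ρ.prod.setoid (x, z)) '' {z : X | dist x z ≤ R} := by
      rintro x f ⟨⟨p, hp, rfl⟩, hr⟩
      have hr' : Quotient.mk ρ.setoid p.1 = Quotient.mk ρ.setoid x := hr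
      obtain ⟨γ, hγ⟩ := Quotient.exact hr'
      refine ⟨ρ.act p.2 γ, ?_, ?_⟩
      · show dist x (ρ.act p.2 γ) ≤ R
        rw [← hγ, hiso]
        exact hp
      · refine (Quotient.sound ?_).symm
        exact ⟨γ, Prod.ext hγ rfl⟩
    have fiber_s : ∀ y : X,
        {f | f ∈ deltaQ ρ R ∧ sourceMap ρ f = Quotient.mk ρ.setoid y} ⊆
          (fun z => Quotient.mk ρ.prod.setoid (z, y)) '' {z : X | dist y z ≤ R} := by
      rintro y f ⟨⟨p, hp, rfl⟩, hs⟩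
      have hs' : Quotient.mk ρ.setoid p.2 = Quotient.mk ρ.setoid y := hs
      obtain ⟨γ, hγ⟩ := Quotient.exact hs'
      refine ⟨ρ.act p.1 γ, ?_, ?_⟩
      · show dist y (ρ.act p.1 γ) ≤ R
        rw [← hγ, hiso, dist_comm]
        exact hp
      · refine (Quotient.sound ?_).symm
        exact ⟨γ, Prod.ext rfl hγ⟩
    -- the key conflict-set bound
    have key : ∀ e ∈ deltaQ ρ R,
        {f | f ∈ deltaQ ρ R ∧ G e f}.Finite ∧
        {f | f ∈ deltaQ ρ R ∧ G e f}.ncard ≤ 2 * NR - 2 := by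
      rintro e he
      obtain ⟨p, hp, rfl⟩ := he
      set A : Set Q := {f | f ∈ deltaQ ρ R ∧
        rangeMap ρ f = Quotient.mk ρ.setoid p.1} with hA
      set B : Set Q := {f | f ∈ deltaQ ρ R ∧
        sourceMap ρ f = Quotient.mk ρ.setoid p.2} with hB
      have hballA := hN p.1
      have hballB := hN p.2
      have hAfin : A.Finite :=
        Set.Finite.subset (hballA.1.image _) (fiber_r p.1)
      have hBfin : B.Finite :=
        Set.Finite.subset (hballB.1.image _) (fiber_s p.2)
      have hAcard : A.ncard ≤ NR :=
        le_trans (Set.ncard_le_ncard (fiber_r p.1) (hballA.1.image _))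
          (le_trans (Set.ncard_image_le hballA.1) hballA.2)
      have hBcard : B.ncard ≤ NR :=
        le_trans (Set.ncard_le_ncard (fiber_s p.2) (hballB.1.image _))
          (le_trans (Set.ncard_image_le hballB.1) hballB.2)
      set e := Quotient.mk ρ.prod.setoid p with he'
      have heA : e ∈ A := ⟨⟨p, hp, rfl⟩, rfl⟩
      have heB : e ∈ B := ⟨⟨p, hp, rfl⟩, rfl⟩
      have hCsub : {f | f ∈ deltaQ ρ R ∧ G e f} ⊆ (A \ {e}) ∪ (B \ {e}) := by
        rintro f ⟨hf, hne, hror⟩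
        rcases hror with h | h
        · exact Or.inl ⟨⟨hf, h.symm⟩, fun hfe => hne (by rw [hfe])⟩
        · exact Or.inr ⟨⟨hf, h.symm⟩, fun hfe => hne (by rw [hfe])⟩
      have hCfin : {f | f ∈ deltaQ ρ R ∧ G e f}.Finite :=
        Set.Finite.subset (hAfin.diff.union hBfin.diff) hCsub
      have hA' : (A \ {e}).ncard = A.ncard - 1 :=
        Set.ncard_diff_singleton_of_mem heA
      have hB' : (B \ {e}).ncard = B.ncard - 1 :=
        Set.ncard_diff_singleton_of_mem heB
      have hANE : 1 ≤ A.ncard := (Set.ncard_pos hAfin).mpr ⟨e, heA⟩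
      have hBNE : 1 ≤ B.ncard := (Set.ncard_pos hBfin).mpr ⟨e, heB⟩
      have hunion := Set.ncard_union_le (A \ {e}) (B \ {e})
      have hle := Set.ncard_le_ncard hCsub (hAfin.diff.union hBfin.diff)
      refine ⟨hCfin, ?_⟩
      omega
    obtain ⟨V, hVsub, hVdisj, hVunion, hVind⟩ :=
      color_lemma (deltaQ ρ R) G hsymm hirr (2 * NR - 2) key
    refine ⟨2 * NR - 2 + 1, V, by omega, hVsub, hVdisj, hVunion, ?_⟩
    intro i
    constructor
    · intro a ha b hb hab
      by_contra hne
      exact hVind i a ha b hb ⟨hne, Or.inl hab⟩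
    · intro a ha b hb hab
      by_contra hne
      exact hVind i a ha b hb ⟨hne, Or.inr hab⟩
end

section
/- Let X be a metric space with bounded geometry equipped with a free, proper, isometric right action of a countable discrete group Γ. Let r̄, s̄ : β((X×X)/Γ) → β(X/Γ) denote the unique continuous extensions of r₀ and s₀ to the Stone–Čech compactifications of the discrete spaces (X×X)/Γ and X/Γ. Then for every R ≥ 0 and every point ω of the closure of Δ_R/Γ in β((X×X)/Γ), there exists a clopen neighborhood U of ω in β((X×X)/Γ) such that the restrictions of r̄ and of s̄ to U are both homeomorphisms onto their images. (This is the étaleness of the range and source maps of the equivariant coarse groupoid, Theorem 3.9.) -/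
/-- `X` has bounded geometry. -/
def BoundedGeometry (X : Type*) [MetricSpace X] : Prop :=
  ∀ R : ℝ, 0 ≤ R → ∃ N : ℕ, ∀ x : X,
    {y : X | dist x y ≤ R}.Finite ∧ {y : X | dist x y ≤ R}.ncard ≤ N


open Set

/-- A finite set of cardinality at most `N` admits a coloring of the ambient type
by `Fin (N+1)` that is injective on the set. -/
lemma exists_injOn_fin {D : Type*} (S : Set D) (N : ℕ) (hfin : S.Finite)
    (hcard : S.ncard ≤ N) : ∃ g : D → Fin (N + 1), Set.InjOn g S := by
  classical
  haveI := hfin.fintype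
  have hcard' : Fintype.card S ≤ Fintype.card (Fin (N + 1)) := by
    rw [Fintype.card_fin]
    have : S.ncard = Fintype.card S := by
      rw [Set.ncard_eq_toFinset_card', Set.toFinset_card]
    omega
  obtain ⟨e⟩ := Function.Embedding.nonempty_of_card_le hcard'
  refine ⟨fun d => if h : d ∈ S then e ⟨d, h⟩ else 0, ?_⟩
  intro a ha b hb hab
  simp only [dif_pos ha, dif_pos hb] at hab
  exact congrArg Subtype.val (e.injective hab)

/-- Coloring lemma: if all fibers of `f` within `S` are finite of cardinality at most
`N`, there is a coloring by `Fin (N+1)` making `f` injective on each color class. -/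
lemma exists_coloring {D E : Type*} (f : D → E) (S : Set D) (N : ℕ)
    (h : ∀ e : E, ({q ∈ S | f q = e}).Finite ∧ ({q ∈ S | f q = e}).ncard ≤ N) :
    ∃ c : D → Fin (N + 1), ∀ i : Fin (N + 1), Set.InjOn f (S ∩ c ⁻¹' {i}) := by
  classical
  choose g hg using fun e : E => exists_injOn_fin _ N (h e).1 (h e).2
  refine ⟨fun d => g (f d) d, fun i => ?_⟩
  rintro a ⟨haS, hai⟩ b ⟨hbS, hbi⟩ hab
  have hca : g (f a) a = i := hai
  have hcb : g (f b) b = i := hbi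
  rw [hab] at hca
  exact hg (f b) ⟨haS, hab⟩ ⟨hbS, rfl⟩ (hca.trans hcb.symm)

section StoneCech

variable {D E : Type*} [TopologicalSpace D] [DiscreteTopology D]
  [TopologicalSpace E] [DiscreteTopology E]

/-- If `f₀` is injective on `A`, any continuous extension of it to the Stone–Čech
compactification is injective on the closure of the image of `A`. -/
lemma injOn_closure_of_injOn (f₀ : D → E) (A : Set D) (hinj : Set.InjOn f₀ A)
    (fbar : StoneCech D → StoneCech E) (hc : Continuous fbar)
    (hext : ∀ d, fbar (stoneCechUnit d) = stoneCechUnit (f₀ d)) :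
    Set.InjOn fbar (closure (stoneCechUnit '' A)) := by
  classical
  rcases A.eq_empty_or_nonempty with rfl | ⟨a₀, ha₀⟩
  · simp
  set g : E → D := fun e => if h : ∃ a ∈ A, f₀ a = e then h.choose else a₀ with hgdef
  have hgf : ∀ a ∈ A, g (f₀ a) = a := by
    intro a ha
    have h : ∃ a' ∈ A, f₀ a' = f₀ a := ⟨a, ha, rfl⟩
    simp only [hgdef, dif_pos h]
    exact hinj h.choose_spec.1 ha h.choose_spec.2
  have hcg : Continuous (stoneCechUnit ∘ g : E → StoneCech D) :=
    continuous_of_discreteTopology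
  have key : ∀ x ∈ closure (stoneCechUnit '' A), stoneCechExtend hcg (fbar x) = x := by
    have hcl : IsClosed {x : StoneCech D | stoneCechExtend hcg (fbar x) = x} :=
      isClosed_eq ((continuous_stoneCechExtend hcg).comp hc) continuous_id
    intro x hx
    refine hcl.closure_subset_iff.mpr ?_ hx
    rintro y ⟨a, ha, rfl⟩
    show stoneCechExtend hcg (fbar (stoneCechUnit a)) = stoneCechUnit a
    rw [hext]
    have h2 : stoneCechExtend hcg (stoneCechUnit (f₀ a)) = stoneCechUnit (g (f₀ a)) :=
      congrFun (stoneCechExtend_extends hcg) (f₀ a)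
    rw [h2]
    exact congrArg stoneCechUnit (hgf a ha)
  intro x hx y hy hxy
  rw [← key x hx, ← key y hy, hxy]

/-- Closures of images of subsets of a discrete space in the Stone–Čech
compactification are clopen. -/
lemma exists_clopen_between (A : Set D) :
    ∃ U : Set (StoneCech D), IsClopen U ∧ stoneCechUnit '' A ⊆ U ∧
      U ⊆ closure (stoneCechUnit '' A) := by
  classical
  have hχ : Continuous (fun d => decide (d ∈ A) : D → Bool) :=
    continuous_of_discreteTopology
  set χbar := stoneCechExtend hχ with hχbar
  refine ⟨χbar ⁻¹' {true}, (isClopen_discrete _).preimage (continuous_stoneCechExtend hχ),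
    ?_, ?_⟩
  · rintro y ⟨a, ha, rfl⟩
    have : χbar (stoneCechUnit a) = decide (a ∈ A) := congrFun (stoneCechExtend_extends hχ) a
    simp [this, ha]
  · intro x hx
    rw [mem_closure_iff]
    intro O hO hxO
    have hopen : IsOpen (O ∩ χbar ⁻¹' {true}) :=
      hO.inter ((isOpen_discrete _).preimage (continuous_stoneCechExtend hχ))
    obtain ⟨d, hd⟩ := denseRange_stoneCechUnit.exists_mem_open hopen ⟨x, hxO, hx⟩
    have : χbar (stoneCechUnit d) = decide (d ∈ A) := congrFun (stoneCechExtend_extends hχ) d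
    have hdA : d ∈ A := by
      have h3 := hd.2
      simp only [Set.mem_preimage, Set.mem_singleton_iff, this] at h3
      exact of_decide_eq_true h3
    exact ⟨stoneCechUnit d, hd.1, ⟨d, hdA, rfl⟩⟩

end StoneCech


section Main

variable {Γ X : Type*} [Group Γ] [MetricSpace X]

lemma discrete_of_bg (hbg : BoundedGeometry X) : DiscreteTopology X := by
  refine discreteTopology_iff_isOpen_singleton.mpr fun x => ?_
  obtain ⟨N, hN⟩ := hbg 1 zero_le_one
  have hfin : ({y : X | dist x y ≤ 1} \ {x}).Finite := (hN x).1.diff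
  have hx : ({x} : Set X) = Metric.ball x 1 \ ({y : X | dist x y ≤ 1} \ {x}) := by
    ext y
    simp only [Set.mem_singleton_iff, Set.mem_diff, Metric.mem_ball, Set.mem_setOf_eq]
    constructor
    · rintro rfl; simp
    · rintro ⟨h1, h2⟩
      by_contra hne
      exact h2 ⟨by rw [dist_comm]; exact h1.le, hne⟩
  rw [hx]
  exact Metric.isOpen_ball.sdiff hfin.isClosed

lemma discrete_quot {Y : Type*} [TopologicalSpace Y] [DiscreteTopology Y] (s : Setoid Y) :
    DiscreteTopology (Quotient s) := by
  refine discreteTopology_iff_isOpen_singleton.mpr fun q => ?_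
  exact isQuotientMap_quot_mk.isOpen_preimage.mp (isOpen_discrete _)

lemma fiber_range (ρ : RightAction Γ X) (hfree : ρ.IsFree) (hiso : ρ.IsIsometric)
    {R : ℝ} {N : ℕ} (hN : ∀ x : X, {y : X | dist x y ≤ R}.Finite ∧
      {y : X | dist x y ≤ R}.ncard ≤ N) (e : Quotient ρ.setoid) :
    ({q ∈ deltaQ ρ R | rangeMap ρ q = e}).Finite ∧
      ({q ∈ deltaQ ρ R | rangeMap ρ q = e}).ncard ≤ N := by
  have hsub : {q ∈ deltaQ ρ R | rangeMap ρ q = e} ⊆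
      (fun y => Quotient.mk ρ.prod.setoid (e.out, y)) '' {y : X | dist e.out y ≤ R} := by
    rintro q ⟨⟨p, hp, rfl⟩, hr⟩
    have h1 : rangeMap ρ (Quotient.mk ρ.prod.setoid p) = Quotient.mk ρ.setoid p.1 := rfl
    rw [h1] at hr
    have hr' : Quotient.mk ρ.setoid p.1 = Quotient.mk ρ.setoid e.out := by
      rw [hr, Quotient.out_eq]
    obtain ⟨γ, hγ⟩ := Quotient.exact hr'
    refine ⟨ρ.act p.2 γ, ?_, ?_⟩
    · show dist e.out (ρ.act p.2 γ) ≤ R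
      rw [← hγ, hiso]
      exact hp
    · refine Quotient.sound (s := ρ.prod.setoid) ⟨γ⁻¹, ?_⟩
      show (ρ.act e.out γ⁻¹, ρ.act (ρ.act p.2 γ) γ⁻¹) = p
      rw [← hγ, ρ.act_mul, ρ.act_mul, mul_inv_cancel, ρ.act_one, ρ.act_one]
  refine ⟨(((hN e.out).1).image _).subset hsub, ?_⟩
  calc ({q ∈ deltaQ ρ R | rangeMap ρ q = e}).ncard
      ≤ ((fun y => Quotient.mk ρ.prod.setoid (e.out, y)) '' {y : X | dist e.out y ≤ R}).ncard :=
        Set.ncard_le_ncard hsub (((hN e.out).1).image _)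
    _ ≤ ({y : X | dist e.out y ≤ R}).ncard := Set.ncard_image_le (hN e.out).1
    _ ≤ N := (hN e.out).2

lemma fiber_source (ρ : RightAction Γ X) (hfree : ρ.IsFree) (hiso : ρ.IsIsometric)
    {R : ℝ} {N : ℕ} (hN : ∀ x : X, {y : X | dist x y ≤ R}.Finite ∧
      {y : X | dist x y ≤ R}.ncard ≤ N) (e : Quotient ρ.setoid) :
    ({q ∈ deltaQ ρ R | sourceMap ρ q = e}).Finite ∧
      ({q ∈ deltaQ ρ R | sourceMap ρ q = e}).ncard ≤ N := by
  have hsub : {q ∈ deltaQ ρ R | sourceMap ρ q = e} ⊆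
      (fun z => Quotient.mk ρ.prod.setoid (z, e.out)) '' {z : X | dist e.out z ≤ R} := by
    rintro q ⟨⟨p, hp, rfl⟩, hr⟩
    have h1 : sourceMap ρ (Quotient.mk ρ.prod.setoid p) = Quotient.mk ρ.setoid p.2 := rfl
    rw [h1] at hr
    have hr' : Quotient.mk ρ.setoid p.2 = Quotient.mk ρ.setoid e.out := by
      rw [hr, Quotient.out_eq]
    obtain ⟨γ, hγ⟩ := Quotient.exact hr'
    refine ⟨ρ.act p.1 γ, ?_, ?_⟩
    · show dist e.out (ρ.act p.1 γ) ≤ R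
      rw [← hγ, dist_comm, hiso]
      exact hp
    · refine Quotient.sound (s := ρ.prod.setoid) ⟨γ⁻¹, ?_⟩
      show (ρ.act (ρ.act p.1 γ) γ⁻¹, ρ.act e.out γ⁻¹) = p
      rw [← hγ, ρ.act_mul, ρ.act_mul, mul_inv_cancel, ρ.act_one, ρ.act_one]
  refine ⟨(((hN e.out).1).image _).subset hsub, ?_⟩
  calc ({q ∈ deltaQ ρ R | sourceMap ρ q = e}).ncard
      ≤ ((fun z => Quotient.mk ρ.prod.setoid (z, e.out)) '' {z : X | dist e.out z ≤ R}).ncard :=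
        Set.ncard_le_ncard hsub (((hN e.out).1).image _)
    _ ≤ ({z : X | dist e.out z ≤ R}).ncard := Set.ncard_image_le (hN e.out).1
    _ ≤ N := (hN e.out).2

end Main

/-- Étaleness of the equivariant coarse groupoid: if `r̄, s̄` are the (unique)
continuous extensions of `r₀, s₀` to the Stone–Čech compactifications, then every
point of the closure of `Δ_R/Γ` has a clopen neighborhood on which both `r̄` and
`s̄` restrict to homeomorphisms onto their images (i.e. topological embeddings). -/
theorem etale_range_and_source
    {Γ X : Type*} [Group Γ] [Countable Γ] [MetricSpace X]
    (ρ : RightAction Γ X) (hfree : ρ.IsFree) (hproper : ρ.IsProper)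
    (hiso : ρ.IsIsometric) (hbg : BoundedGeometry X)
    (rbar sbar : StoneCech (Quotient ρ.prod.setoid) → StoneCech (Quotient ρ.setoid))
    (hrcont : Continuous rbar)
    (hrext : ∀ q : Quotient ρ.prod.setoid,
      rbar (stoneCechUnit q) = stoneCechUnit (rangeMap ρ q))
    (hscont : Continuous sbar)
    (hsext : ∀ q : Quotient ρ.prod.setoid,
      sbar (stoneCechUnit q) = stoneCechUnit (sourceMap ρ q)) :
    ∀ R : ℝ, 0 ≤ R →
      ∀ ω ∈ closure (stoneCechUnit '' deltaQ ρ R),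
        ∃ U : Set (StoneCech (Quotient ρ.prod.setoid)),
          IsClopen U ∧ ω ∈ U ∧
          Topology.IsEmbedding (U.restrict rbar) ∧
          Topology.IsEmbedding (U.restrict sbar) := by
  intro R hR ω hω
  haveI : DiscreteTopology X := discrete_of_bg hbg
  haveI : DiscreteTopology (X × X) := inferInstance
  haveI hDQ : DiscreteTopology (Quotient ρ.prod.setoid) := discrete_quot _
  haveI hEQ : DiscreteTopology (Quotient ρ.setoid) := discrete_quot _
  obtain ⟨N, hN⟩ := hbg R hR
  -- colorings making rangeMap and sourceMap injective on color classes of `deltaQ ρ R`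
  obtain ⟨cr, hcr⟩ := exists_coloring (rangeMap ρ) (deltaQ ρ R) N
    (fiber_range ρ hfree hiso hN)
  obtain ⟨cs, hcs⟩ := exists_coloring (sourceMap ρ) (deltaQ ρ R) N
    (fiber_source ρ hfree hiso hN)
  set A : Fin (N + 1) × Fin (N + 1) → Set (Quotient ρ.prod.setoid) :=
    fun ij => deltaQ ρ R ∩ cr ⁻¹' {ij.1} ∩ cs ⁻¹' {ij.2} with hA
  -- ω lies in the closure of one of the pieces
  have hcover : stoneCechUnit '' deltaQ ρ R ⊆
      ⋃ ij, closure (stoneCechUnit '' A ij) := by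
    rintro z ⟨q, hq, rfl⟩
    exact Set.mem_iUnion.mpr ⟨(cr q, cs q),
      subset_closure ⟨q, ⟨⟨hq, rfl⟩, rfl⟩, rfl⟩⟩
  have hωU : ω ∈ ⋃ ij, closure (stoneCechUnit '' A ij) :=
    closure_minimal hcover (isClosed_iUnion_of_finite fun ij => isClosed_closure) hω
  obtain ⟨ij, hij⟩ := Set.mem_iUnion.mp hωU
  -- both maps are injective on the piece
  have hinjr : Set.InjOn (rangeMap ρ) (A ij) := fun a ha b hb =>
    hcr ij.1 ⟨ha.1.1, ha.1.2⟩ ⟨hb.1.1, hb.1.2⟩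
  have hinjs : Set.InjOn (sourceMap ρ) (A ij) := fun a ha b hb =>
    hcs ij.2 ⟨ha.1.1, ha.2⟩ ⟨hb.1.1, hb.2⟩
  obtain ⟨U, hUclopen, hUsub, hUcl⟩ := exists_clopen_between (A ij)
  refine ⟨U, hUclopen, hUclopen.1.closure_subset_iff.mpr hUsub hij, ?_, ?_⟩
  · have hinj : Set.InjOn rbar U :=
      (injOn_closure_of_injOn (rangeMap ρ) (A ij) hinjr rbar hrcont hrext).mono hUcl
    haveI : CompactSpace U := isCompact_iff_compactSpace.mp hUclopen.1.isCompact
    exact ((hrcont.comp continuous_subtype_val).isClosedEmbedding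
      ((Set.injOn_iff_injective).mp hinj)).isEmbedding
  · have hinj : Set.InjOn sbar U :=
      (injOn_closure_of_injOn (sourceMap ρ) (A ij) hinjs sbar hscont hsext).mono hUcl
    haveI : CompactSpace U := isCompact_iff_compactSpace.mp hUclopen.1.isCompact
    exact ((hscont.comp continuous_subtype_val).isClosedEmbedding
      ((Set.injOn_iff_injective).mp hinj)).isEmbedding
end

section
/- Let X be a metric space equipped with a free isometric right action of a group Γ. Then the map Φ from the fibered product {(ω, z) ∈ ((X×X)/Γ) × X : s₀(ω) = [z]} to X × X, defined by Φ([y,x], xγ) = (yγ, xγ) (where γ is the unique element with z = xγ when ω = [y,x] and [z] = [x]), is a well-defined bijection; moreover, for every R ≥ 0 it restricts to a bijection from {([y,x], z) : (y,x) ∈ Δ_R, [x] = [z]} onto Δ_R. (This is the discrete core of the isomorphism G(X) ≅ G(X,Γ) ⋉ βX of Lemma 5.4.) -/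
/-- The discrete core of the isomorphism `G(X) ≅ G(X,Γ) ⋉ βX`: the map
`Φ([y,x], xγ) = (yγ, xγ)` from the fibered product
`{(ω,z) : ((X×X)/Γ) × X | s₀(ω) = [z]}` to `X × X` is a well-defined bijection,
restricting for every `R ≥ 0` to a bijection onto `Δ_R`. -/
theorem discrete_transformation_groupoid_iso
    {Γ X : Type*} [Group Γ] [MetricSpace X]
    (ρ : RightAction Γ X) (hfree : ρ.IsFree) (hiso : ρ.IsIsometric) :
    ∃ Φ : {w : Quotient ρ.prod.setoid × X //
        sourceMap ρ w.1 = Quotient.mk ρ.setoid w.2} → X × X,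
      (∀ (y x : X) (γ : Γ)
        (h : sourceMap ρ (Quotient.mk ρ.prod.setoid (y, x)) =
          Quotient.mk ρ.setoid (ρ.act x γ)),
        Φ ⟨(Quotient.mk ρ.prod.setoid (y, x), ρ.act x γ), h⟩ =
          (ρ.act y γ, ρ.act x γ)) ∧
      Function.Bijective Φ ∧
      ∀ R : ℝ, 0 ≤ R →
        Set.BijOn Φ {w | w.val.1 ∈ deltaQ ρ R} {p : X × X | dist p.1 p.2 ≤ R} := by
  classical
  -- The inverse map Ψ : X × X → fibered product
  set S := {w : Quotient ρ.prod.setoid × X //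
      sourceMap ρ w.1 = Quotient.mk ρ.setoid w.2} with hS
  let Ψ : X × X → S := fun p => ⟨(Quotient.mk ρ.prod.setoid p, p.2), rfl⟩
  have hΨbij : Function.Bijective Ψ := by
    constructor
    · rintro ⟨a, b⟩ ⟨a', b'⟩ h
      have hval : ((Quotient.mk ρ.prod.setoid (a, b), b) : Quotient ρ.prod.setoid × X)
          = (Quotient.mk ρ.prod.setoid (a', b'), b') := congrArg Subtype.val h
      have h1 := congrArg Prod.fst hval
      have h2 : b = b' := congrArg Prod.snd hval
      obtain ⟨γ, hγ⟩ := Quotient.exact h1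
      have hγ1 : ρ.act a γ = a' := congrArg Prod.fst hγ
      have hγ2 : ρ.act b γ = b' := congrArg Prod.snd hγ
      have : γ = 1 := hfree b γ (by rw [hγ2, h2])
      subst this
      simp only [ρ.act_one] at hγ1
      exact Prod.ext hγ1 h2
    · rintro ⟨⟨ω, z⟩, hw⟩
      obtain ⟨⟨y, x⟩, rfl⟩ := Quotient.exists_rep ω
      obtain ⟨γ, hγ⟩ := Quotient.exact hw
      have hγ' : ρ.act x γ = z := hγ
      refine ⟨(ρ.act y γ, z), ?_⟩
      apply Subtype.ext
      refine Prod.ext ?_ rfl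
      refine Quotient.sound ⟨γ⁻¹, Prod.ext ?_ ?_⟩
      · show ρ.act (ρ.act y γ) γ⁻¹ = y
        rw [ρ.act_mul, mul_inv_cancel, ρ.act_one]
      · show ρ.act z γ⁻¹ = x
        rw [← hγ', ρ.act_mul, mul_inv_cancel, ρ.act_one]
  let e := Equiv.ofBijective Ψ hΨbij
  refine ⟨e.symm, ?_, e.symm.bijective, ?_⟩
  · intro y x γ h
    rw [Equiv.symm_apply_eq]
    apply Subtype.ext
    refine Prod.ext ?_ rfl
    have hr : ρ.prod.setoid.r (y, x) (ρ.act y γ, ρ.act x γ) := ⟨γ, rfl⟩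
    show Quotient.mk ρ.prod.setoid (y, x)
        = (Ψ (ρ.act y γ, ρ.act x γ)).val.1
    exact Quotient.sound hr
  · intro R hR
    refine ⟨?_, fun w _ w' _ h => e.symm.injective h, ?_⟩
    · rintro w hw
      obtain ⟨p, hp, hpe⟩ := hw
      set q := e.symm w with hq
      have hwq : w = Ψ q := (e.apply_symm_apply w).symm
      have h1 : Quotient.mk ρ.prod.setoid p = Quotient.mk ρ.prod.setoid q := by
        rw [hpe, hwq]
      obtain ⟨γ, hγ⟩ := Quotient.exact h1
      have hγ1 : ρ.act p.1 γ = q.1 := congrArg Prod.fst hγ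
      have hγ2 : ρ.act p.2 γ = q.2 := congrArg Prod.snd hγ
      show dist q.1 q.2 ≤ R
      rw [← hγ1, ← hγ2, hiso]
      exact hp
    · rintro ⟨a, b⟩ hab
      rw [Set.mem_image]
      refine ⟨Ψ (a, b), ?_, e.symm_apply_apply _⟩
      exact ⟨(a, b), hab, rfl⟩
end
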